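/- Suppose v : ℤ → ℂ^k represents a point of the skew shaped positroid S°_{λ/μ}, the box (a,i) belongs to λ/μ but not to the boundary ribbon R(λ/μ) (i.e. a ≥ 2 and i+1 ≤ λ̄_{a−1}), and the box (a+1,i) belongs to λ/μ. Then V(a,i) ≠ V(a+1,i). -/
import Mathlib


/-- The height `λ̄_a` of the `a`-th column (counted from the right) of the
partition `f = (f 1 ≥ ⋯ ≥ f k)` inside the `k × (n-k)` rectangle. -/
def colHeight (n k : ℕ) (f : ℕ → ℕ) (a : ℕ) : ℕ :=
  ((Finset.Icc 1 k).filter (fun i => n - k - a + 1 ≤ f i)).card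

/-- `b_i = n - k - μ_i + i`. -/
def bvec (n k : ℕ) (m : ℕ → ℕ) (i : ℕ) : ℕ := n - k - m i + i

/-- The short label `J(a,i) = {min (a+j-1) (b_j) : j = 1, …, i}`. -/
def shortLabel (n k : ℕ) (m : ℕ → ℕ) (a i : ℕ) : Finset ℕ :=
  (Finset.Icc 1 i).image (fun j => min (a + j - 1) (bvec n k m j))

/-- The label `I'(a,i) = J(a,i) ∪ {b_{i+1}, …, b_k}`. -/
def fullLabel (n k : ℕ) (m : ℕ → ℕ) (a i : ℕ) : Finset ℕ :=
  shortLabel n k m a i ∪ (Finset.Icc (i + 1) k).image (bvec n k m)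

/-- `I_μ = {b_1, …, b_k}`. -/
def Imu (n k : ℕ) (m : ℕ → ℕ) : Finset ℕ := (Finset.Icc 1 k).image (bvec n k m)

/-- The box `(a,i)` belongs to the skew diagram `λ/μ`. -/
def InSkew (n k : ℕ) (l m : ℕ → ℕ) (a i : ℕ) : Prop :=
  1 ≤ a ∧ a ≤ n - k ∧ 1 ≤ i ∧ i ≤ k ∧ colHeight n k m a < i ∧ i ≤ colHeight n k l a

/-- The box `(a,i)` belongs to the boundary ribbon `R(λ/μ)`. -/
def InRibbon (n k : ℕ) (l m : ℕ → ℕ) (a i : ℕ) : Prop :=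
  InSkew n k l m a i ∧ (a = 1 ∨ colHeight n k l (a - 1) ≤ i)

/-- `S` is the `r`-th entry of the Grassmann necklace `I_{λ/μ}`. -/
def IsNecklaceEntry (n k : ℕ) (l m : ℕ → ℕ) (r : ℕ) (S : Finset ℕ) : Prop :=
  (∃ a i, InRibbon n k l m a i ∧ r = a + i - 1 ∧ S = fullLabel n k m a i) ∨
  ((¬ ∃ a i, InRibbon n k l m a i ∧ r = a + i - 1) ∧ S = Imu n k m)

/-- The family `{v_j : j ∈ S}` is a basis of `ℂ^k`. -/
def IsBasisFam (k : ℕ) (v : ℤ → Fin k → ℂ) (S : Finset ℕ) : Prop :=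
  LinearIndependent ℂ (fun j : ↥S => v ((j : ℕ) : ℤ)) ∧
  Submodule.span ℂ ((fun j : ℕ => v (j : ℤ)) '' (S : Set ℕ)) = ⊤

/-- `v : ℤ → ℂ^k` represents a point of the skew shaped positroid `S°_{λ/μ}`. -/
def RepsPoint (n k : ℕ) (l m : ℕ → ℕ) (v : ℤ → Fin k → ℂ) : Prop :=
  (∀ j : ℤ, v (j + (n : ℤ)) = ((-1 : ℂ) ^ (k - 1)) • v j) ∧
  (∀ r ∈ Finset.Icc 1 n, ∀ S : Finset ℕ, IsNecklaceEntry n k l m r S → IsBasisFam k v S) ∧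
  (∀ a : ℕ, 1 ≤ a → a ≤ n - k →
    v ((a + colHeight n k m a : ℕ) : ℤ) ∈
      Submodule.span ℂ ((fun j : ℕ => v (j : ℤ)) ''
        ↑(Finset.Icc (a + colHeight n k m a + 1) (a + colHeight n k l a))))

/-- `V(a,i) = span{v_j : j ∈ J(a,i)}`. -/
noncomputable def Vspace (n k : ℕ) (m : ℕ → ℕ) (v : ℤ → Fin k → ℂ) (a i : ℕ) :
    Submodule ℂ (Fin k → ℂ) :=
  Submodule.span ℂ ((fun j : ℕ => v (j : ℤ)) '' ↑(shortLabel n k m a i))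

/-- `W^op_p = span(v_{b_1}, …, v_{b_p})`. -/
noncomputable def Wop (n k : ℕ) (m : ℕ → ℕ) (v : ℤ → Fin k → ℂ) (p : ℕ) :
    Submodule ℂ (Fin k → ℂ) :=
  Submodule.span ℂ ((fun j : ℕ => v (j : ℤ)) '' ↑((Finset.Icc 1 p).image (bvec n k m)))

/-- `W_p = span(v_{b_{k-p+1}}, …, v_{b_k})`. -/
noncomputable def Wsp (n k : ℕ) (m : ℕ → ℕ) (v : ℤ → Fin k → ℂ) (p : ℕ) :
    Submodule ℂ (Fin k → ℂ) :=
  Submodule.span ℂ ((fun j : ℕ => v (j : ℤ)) '' ↑((Finset.Icc (k - p + 1) k).image (bvec n k m)))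

lemma colHeight_mono (n k : ℕ) (f : ℕ → ℕ) {a a' : ℕ} (h : a ≤ a') :
    colHeight n k f a ≤ colHeight n k f a' := by
  apply Finset.card_le_card
  intro x hx
  rw [Finset.mem_filter] at hx ⊢
  exact ⟨hx.1, by omega⟩

lemma colHeight_le (n k : ℕ) (f : ℕ → ℕ) (a : ℕ) : colHeight n k f a ≤ k := by
  have h := Finset.card_le_card (Finset.filter_subset
    (fun i => n - k - a + 1 ≤ f i) (Finset.Icc 1 k))
  rw [Nat.card_Icc] at h
  unfold colHeight
  omega

lemma bvec_big (n k : ℕ) (m : ℕ → ℕ)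
    (hmmono : ∀ i j, 1 ≤ i → i ≤ j → j ≤ k → m j ≤ m i)
    (a j : ℕ) (hj1 : 1 ≤ j) (hjk : j ≤ k) (hlt : colHeight n k m a < j)
    (han : a ≤ n - k) : a + j ≤ bvec n k m j := by
  have hmj : m j ≤ n - k - a := by
    by_contra hcon
    have hsub : Finset.Icc 1 j ⊆
        (Finset.Icc 1 k).filter (fun i => n - k - a + 1 ≤ m i) := by
      intro x hx
      rw [Finset.mem_Icc] at hx
      rw [Finset.mem_filter, Finset.mem_Icc]
      have := hmmono x j hx.1 hx.2 hjk
      exact ⟨⟨hx.1, le_trans hx.2 hjk⟩, by omega⟩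
    have := Finset.card_le_card hsub
    rw [Nat.card_Icc] at this
    unfold colHeight at hlt
    omega
  unfold bvec
  omega

lemma bvec_gap (n k : ℕ) (m : ℕ → ℕ)
    (hmmono : ∀ i j, 1 ≤ i → i ≤ j → j ≤ k → m j ≤ m i)
    (j j' : ℕ) (hj1 : 1 ≤ j) (hjj : j ≤ j') (hjk : j' ≤ k) :
    bvec n k m j + (j' - j) ≤ bvec n k m j' := by
  have := hmmono j j' hj1 hjj hjk
  unfold bvec
  omega

lemma exists_ribbon (n k : ℕ) (l m : ℕ → ℕ) :
    ∀ A I, InSkew n k l m A I →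
      ∃ a₀ i₀, InRibbon n k l m a₀ i₀ ∧ a₀ + i₀ = A + I ∧ a₀ ≤ A ∧ i₀ ≤ k := by
  intro A
  induction A using Nat.strong_induction_on with
  | _ A ih =>
    intro I hsk
    obtain ⟨hA1, hAn, hI1, hIk, hmu, hla⟩ := hsk
    by_cases hr : A = 1 ∨ colHeight n k l (A - 1) ≤ I
    · exact ⟨A, I, ⟨⟨hA1, hAn, hI1, hIk, hmu, hla⟩, hr⟩, rfl, le_refl _, hIk⟩
    · push_neg at hr
      obtain ⟨hA, hlt⟩ := hr
      have hmu' : colHeight n k m (A - 1) ≤ colHeight n k m A :=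
        colHeight_mono n k m (by omega)
      have hlk : colHeight n k l (A - 1) ≤ k := colHeight_le n k l (A - 1)
      have hsk' : InSkew n k l m (A - 1) (I + 1) :=
        ⟨by omega, by omega, by omega, by omega, by omega, by omega⟩
      obtain ⟨a₀, i₀, hrib, hsum, hle, hk⟩ := ih (A - 1) (by omega) (I + 1) hsk'
      exact ⟨a₀, i₀, hrib, by omega, by omega, hk⟩

lemma shortLabel_subset_fullLabel (n k : ℕ) (m : ℕ → ℕ)
    (hmmono : ∀ i j, 1 ≤ i → i ≤ j → j ≤ k → m j ≤ m i)
    (a I a₀ i₀ : ℕ) (han : a ≤ n - k) (hIk : I ≤ k) (hmuI : colHeight n k m a < I)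
    (ha₀ : a₀ ≤ a) (h1a₀ : 1 ≤ a₀) (hik : i₀ ≤ k) (hsum : a₀ + i₀ = a + I) :
    shortLabel n k m a I ⊆ fullLabel n k m a₀ i₀ := by
  intro x hx
  unfold shortLabel at hx
  rw [Finset.mem_image] at hx
  obtain ⟨j, hj, rfl⟩ := hx
  rw [Finset.mem_Icc] at hj
  apply Finset.mem_union_left
  unfold shortLabel
  rw [Finset.mem_image]
  by_cases hc : bvec n k m j ≤ a + j - 1
  · have hjmu : j ≤ colHeight n k m a := by
      by_contra hcon
      have := bvec_big n k m hmmono a j hj.1 (le_trans hj.2 hIk) (by omega) han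
      omega
    by_cases hc2 : bvec n k m j ≤ a₀ + j - 1
    · exact ⟨j, by rw [Finset.mem_Icc]; omega, by omega⟩
    · have hb1 : a₀ + j ≤ bvec n k m j := by omega
      have hgap : bvec n k m j + ((bvec n k m j - a₀ + 1) - j) ≤
          bvec n k m (bvec n k m j - a₀ + 1) :=
        bvec_gap n k m hmmono j (bvec n k m j - a₀ + 1) hj.1 (by omega) (by omega)
      exact ⟨bvec n k m j - a₀ + 1, by rw [Finset.mem_Icc]; omega, by omega⟩
  · have hb2 : a + j ≤ bvec n k m j := by omega
    have hgap : bvec n k m j + ((a + j - a₀) - j) ≤ bvec n k m (a + j - a₀) :=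
      bvec_gap n k m hmmono j (a + j - a₀) hj.1 (by omega) (by omega)
    exact ⟨a + j - a₀, by rw [Finset.mem_Icc]; omega, by omega⟩

theorem stmt13 (n k : ℕ) (l m : ℕ → ℕ)
    (hk : 0 < k) (hkn : k < n)
    (hlmono : ∀ i j, 1 ≤ i → i ≤ j → j ≤ k → l j ≤ l i)
    (hl1 : l 1 ≤ n - k)
    (hmmono : ∀ i j, 1 ≤ i → i ≤ j → j ≤ k → m j ≤ m i)
    (hml : ∀ i, 1 ≤ i → i ≤ k → m i ≤ l i)
    (v : ℤ → Fin k → ℂ) (hv : RepsPoint n k l m v)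
    (a i : ℕ) (h1 : InSkew n k l m a i)
    (ha : 2 ≤ a) (hnotrib : i + 1 ≤ colHeight n k l (a - 1))
    (h2 : InSkew n k l m (a + 1) i) :
    Vspace n k m v a i ≠ Vspace n k m v (a + 1) i := by
  intro heq
  obtain ⟨ha1, han, hi1, hik, hmu, hla⟩ := h1
  have hmono : colHeight n k l (a - 1) ≤ colHeight n k l a :=
    colHeight_mono n k l (by omega)
  have hlk : colHeight n k l (a - 1) ≤ k := colHeight_le n k l (a - 1)
  have hskew2 : InSkew n k l m a (i + 1) :=
    ⟨ha1, han, by omega, by omega, by omega, by omega⟩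
  obtain ⟨a₀, i₀, hrib, hsum, ha₀a, hi₀k⟩ := exists_ribbon n k l m a (i + 1) hskew2
  have h1a₀ : 1 ≤ a₀ := hrib.1.1
  have hentry : IsNecklaceEntry n k l m (a + i) (fullLabel n k m a₀ i₀) :=
    Or.inl ⟨a₀, i₀, hrib, by omega, rfl⟩
  have hbasis := hv.2.1 (a + i) (by rw [Finset.mem_Icc]; omega) _ hentry
  have hind := hbasis.1
  have hsub1 : shortLabel n k m a (i + 1) ⊆ fullLabel n k m a₀ i₀ :=
    shortLabel_subset_fullLabel n k m hmmono a (i + 1) a₀ i₀ han (by omega)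
      (by omega) ha₀a h1a₀ hi₀k hsum
  have hsubT : shortLabel n k m a i ⊆ shortLabel n k m a (i + 1) := by
    apply Finset.image_subset_image
    intro x hx
    rw [Finset.mem_Icc] at hx ⊢
    omega
  have hP1a : a + (i + 1) ≤ bvec n k m (i + 1) :=
    bvec_big n k m hmmono a (i + 1) (by omega) (by omega) (by omega) han
  have hxmem : a + i ∈ shortLabel n k m a (i + 1) := by
    unfold shortLabel
    rw [Finset.mem_image]
    exact ⟨i + 1, by rw [Finset.mem_Icc]; omega, by omega⟩
  have hxnot : a + i ∉ shortLabel n k m a i := by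
    unfold shortLabel
    rw [Finset.mem_image]
    rintro ⟨j, hj, hje⟩
    rw [Finset.mem_Icc] at hj
    omega
  have hnot : v ((a + i : ℕ) : ℤ) ∉ Vspace n k m v a i := by
    have h := hind.notMem_span_image
      (s := {j : {x // x ∈ fullLabel n k m a₀ i₀} | (j : ℕ) ∈ shortLabel n k m a i})
      (x := ⟨a + i, hsub1 hxmem⟩) hxnot
    have himg : (fun j : {x // x ∈ fullLabel n k m a₀ i₀} => v ((j : ℕ) : ℤ)) ''
        {j : {x // x ∈ fullLabel n k m a₀ i₀} | (j : ℕ) ∈ shortLabel n k m a i} =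
        (fun jn : ℕ => v (jn : ℤ)) '' ↑(shortLabel n k m a i) := by
      ext y
      simp only [Set.mem_image, Set.mem_setOf_eq, Finset.mem_coe]
      constructor
      · rintro ⟨⟨j, hjS⟩, hjT, rfl⟩
        exact ⟨j, hjT, rfl⟩
      · rintro ⟨j, hjT, rfl⟩
        exact ⟨⟨j, hsub1 (hsubT hjT)⟩, hjT, rfl⟩
    unfold Vspace
    rw [← himg]
    exact h
  have hP : a + i ≤ bvec n k m i := bvec_big n k m hmmono a i hi1 hik hmu han
  have hmem : v ((a + i : ℕ) : ℤ) ∈ Vspace n k m v (a + 1) i := by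
    apply Submodule.subset_span
    refine ⟨a + i, ?_, rfl⟩
    rw [Finset.mem_coe]
    unfold shortLabel
    rw [Finset.mem_image]
    exact ⟨i, by rw [Finset.mem_Icc]; omega, by omega⟩
  rw [← heq] at hmem
  exact hnot hmem
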